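/- arXiv:2209.15123 — 2 statements merged into one kernel-verified Lean document; each statement's English description precedes it below -/
import Mathlib

section
/- Shapley-Taylor efficiency: Σ_{i,j ∈ [d]} Φ_{ij}(ν) = ν([d]) − ν(∅), where Φ_{ii}(ν) = ν({i}) − ν(∅) and for i ≠ j, Φ_{ij}(ν) = Σ_{S ⊆ [d]∖{i,j}} W(|S|,d)·∇_{ij}(S) with ∇_{ij}(S) = ν(S∪{i,j}) − ν(S∪{j}) − ν(S∪{i}) + ν(S). -/
/-!
Fix `i` and let `f T = ν (T ∪ {i}) - ν T` be the marginal contribution of `i`. For `j ≠ i` the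
index `Φ i j` is the `W`-weighted sum of the increments `f (S ∪ {j}) - f S`, so summing over `j`
and counting, for each `T ⊆ [d] \ {i}`, how often `f T` occurs with each sign, `∑ j, Φ i j` is a
combination of the values `f T`. The identity `t W(t - 1, d) = (d - t) W(t, d)` collapses this
combination to the Shapley value `φ i = ∑ T, W(|T|, d) f T`. The same count applied to
`∑ i, φ i` leaves only the terms `T = ∅` and `T = [d]`, which give `ν [d] - ν ∅`.
-/

open Finset

noncomputable def W (k n : ℕ) : ℝ :=
  (Nat.factorial k * Nat.factorial (n - k - 1) : ℝ) / (Nat.factorial n : ℝ)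

/-- Shapley-Taylor index of the pair (i, j) for the game ν on d players. -/
noncomputable def shapleyTaylor {d : ℕ} (ν : Finset (Fin d) → ℝ) (i j : Fin d) : ℝ :=
  if i = j then ν {i} - ν ∅
  else ∑ S ∈ ((Finset.univ.erase i).erase j).powerset,
    W S.card d * (ν (insert i (insert j S)) - ν (insert j S) - ν (insert i S) + ν S)

section DoubleCounting

variable {α M : Type*} [DecidableEq α] [AddCommMonoid M]

theorem sum_sum_powerset_erase_insert (U : Finset α) (G : Finset α → M) :
    ∑ j ∈ U, ∑ S ∈ (U.erase j).powerset, G (insert j S) = ∑ T ∈ U.powerset, T.card • G T := by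
  calc ∑ j ∈ U, ∑ S ∈ (U.erase j).powerset, G (insert j S)
      = ∑ j ∈ U, ∑ T ∈ U.powerset with j ∈ T, G T := by
        refine sum_congr rfl fun j hj => sum_nbij' (insert j) (·.erase j) ?_ ?_ ?_ ?_ fun _ _ => rfl
        all_goals intro S hS; simp only [mem_powerset, mem_filter] at hS ⊢
        · exact ⟨insert_subset hj (hS.trans (erase_subset _ _)), mem_insert_self _ _⟩
        · exact erase_subset_erase _ hS.1
        · exact erase_insert fun h => by simpa using hS h
        · exact insert_erase hS.2
    _ = ∑ T ∈ U.powerset, ∑ j ∈ T, G T :=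
        sum_comm' fun j T => by simp only [mem_filter, mem_powerset]; grind
    _ = ∑ T ∈ U.powerset, T.card • G T := by simp only [sum_const]

theorem sum_sum_powerset_erase (U : Finset α) (G : Finset α → M) :
    ∑ j ∈ U, ∑ S ∈ (U.erase j).powerset, G S = ∑ S ∈ U.powerset, (U.card - S.card) • G S := by
  calc ∑ j ∈ U, ∑ S ∈ (U.erase j).powerset, G S
      = ∑ S ∈ U.powerset, ∑ j ∈ U \ S, G S :=
        sum_comm' fun j S => by simp only [mem_powerset, mem_sdiff, subset_erase]; tauto
    _ = _ := sum_congr rfl fun S hS => by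
        rw [sum_const, card_sdiff_of_subset (mem_powerset.mp hS)]

theorem sum_sum_powerset_erase_mul_sub {R : Type*} [CommRing R] (U : Finset α) (c : ℕ → R)
    (f : Finset α → R) :
    ∑ j ∈ U, ∑ S ∈ (U.erase j).powerset, c S.card * (f (insert j S) - f S)
      = ∑ T ∈ U.powerset,
          ((T.card : R) * c (T.card - 1) - ((U.card : R) - T.card) * c T.card) * f T := by
  have hinsert : ∀ j ∈ U, ∀ S ∈ (U.erase j).powerset,
      c S.card * f (insert j S) = c ((insert j S).card - 1) * f (insert j S) := by
    intro j _ S hS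
    rw [card_insert_of_notMem fun h => by simpa using mem_powerset.mp hS h, Nat.add_sub_cancel]
  simp only [mul_sub, sum_sub_distrib]
  rw [sum_congr rfl fun j hj => sum_congr rfl (hinsert j hj),
    sum_sum_powerset_erase_insert U fun T => c (T.card - 1) * f T,
    sum_sum_powerset_erase U fun S => c S.card * f S, ← sum_sub_distrib]
  refine sum_congr rfl fun T hT => ?_
  rw [nsmul_eq_mul, nsmul_eq_mul, Nat.cast_sub (card_le_card (mem_powerset.mp hT))]
  ring

end DoubleCounting

theorem W_zero {d : ℕ} (hd : 0 < d) : W 0 d = (d : ℝ)⁻¹ := by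
  have hfac : (d : ℝ) * (d - 1).factorial = d.factorial := by
    exact_mod_cast Nat.mul_factorial_pred hd.ne'
  rw [W, Nat.sub_zero, ← hfac]
  field_simp
  simp

theorem W_pred {d : ℕ} (hd : 0 < d) : W (d - 1) d = (d : ℝ)⁻¹ := by
  have hfac : (d : ℝ) * (d - 1).factorial = d.factorial := by
    exact_mod_cast Nat.mul_factorial_pred hd.ne'
  rw [W, show d - (d - 1) - 1 = 0 by omega, ← hfac]
  field_simp
  simp

theorem mul_W_pred {t d : ℕ} (ht : 0 < t) (htd : t < d) :
    (t : ℝ) * W (t - 1) d = ((d : ℝ) - t) * W t d := by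
  have ht' : (t : ℝ) * (t - 1).factorial = t.factorial := by
    exact_mod_cast Nat.mul_factorial_pred ht.ne'
  have hdt : ((d - t : ℕ) : ℝ) * (d - t - 1).factorial = (d - t).factorial := by
    exact_mod_cast Nat.mul_factorial_pred (Nat.sub_pos_of_lt htd).ne'
  rw [W, W, show d - (t - 1) - 1 = d - t by omega, ← Nat.cast_sub htd.le, ← ht', ← hdt]
  ring

theorem mul_W_pred_sub_mul_W {t d : ℕ} (hd : 0 < d) (htd : t ≤ d) :
    (t : ℝ) * W (t - 1) d - ((d : ℝ) - t) * W t d =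
      if t = 0 then -1 else if t = d then 1 else 0 := by
  rcases Nat.eq_zero_or_pos t with rfl | ht
  · simp [W_zero hd, hd.ne']
  rcases htd.lt_or_eq with htd | rfl
  · simp [mul_W_pred ht htd, ht.ne', htd.ne]
  · simp [W_pred hd, ht.ne']

theorem mul_W_pred_sub_pred_mul_W {t d : ℕ} (htd : t < d) :
    (t : ℝ) * W (t - 1) d - ((d : ℝ) - 1 - t) * W t d = W t d - if t = 0 then 1 else 0 := by
  rcases Nat.eq_zero_or_pos t with rfl | ht
  · simp only [CharP.cast_eq_zero, zero_tsub, W_zero htd, zero_mul, sub_zero, zero_sub,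
      ↓reduceIte]
    field_simp
    ring
  · rw [mul_W_pred ht htd, if_neg ht.ne']
    ring

noncomputable def shapleyValue {d : ℕ} (ν : Finset (Fin d) → ℝ) (i : Fin d) : ℝ :=
  ∑ S ∈ (univ.erase i).powerset, W S.card d * (ν (insert i S) - ν S)

theorem sum_shapleyValue {d : ℕ} (ν : Finset (Fin d) → ℝ) :
    ∑ i, shapleyValue ν i = ν univ - ν ∅ := by
  rcases Nat.eq_zero_or_pos d with rfl | hd
  · simp
  have hne : (∅ : Finset (Fin d)) ≠ univ := (univ_nonempty_iff.mpr ⟨⟨0, hd⟩⟩).ne_empty.symm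
  simp only [shapleyValue]
  rw [sum_sum_powerset_erase_mul_sub univ (W · d) ν, card_univ, Fintype.card_fin,
    sum_eq_add_of_mem ∅ univ (empty_mem_powerset _) (mem_powerset_self _) hne]
  · rw [card_empty, card_univ, Fintype.card_fin, mul_W_pred_sub_mul_W hd (Nat.zero_le d),
      mul_W_pred_sub_mul_W hd le_rfl]
    simp only [↓reduceIte, neg_mul, one_mul, hd.ne']
    ring
  · intro T _ ⟨hT0, hTd⟩
    rw [mul_W_pred_sub_mul_W hd (by simpa using card_le_univ T)]
    have hTd' : T.card ≠ d := by
      simpa using ((card_lt_iff_ne_univ T).mpr hTd).ne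
    simp [hT0, hTd']

theorem sum_shapleyTaylor_eq_shapleyValue {d : ℕ} (ν : Finset (Fin d) → ℝ) (i : Fin d) :
    ∑ j, shapleyTaylor ν i j = shapleyValue ν i := by
  set U := univ.erase i
  set f := fun T => ν (insert i T) - ν T
  have hU : (U.card : ℝ) = d - 1 := by
    rw [card_erase_of_mem (mem_univ i), card_univ, Fintype.card_fin, Nat.cast_pred i.pos]
  have hdiag : shapleyTaylor ν i i = f ∅ := by simp [shapleyTaylor, f]
  have hoff : ∀ j ∈ U, shapleyTaylor ν i j
      = ∑ S ∈ (U.erase j).powerset, W S.card d * (f (insert j S) - f S) := by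
    intro j hj
    rw [shapleyTaylor, if_neg (ne_of_mem_erase hj).symm]
    exact sum_congr rfl fun S _ => by ring
  have hcoef : ∀ T ∈ U.powerset,
      ((T.card : ℝ) * W (T.card - 1) d - ((U.card : ℝ) - T.card) * W T.card d) * f T
        = W T.card d * f T - if T = ∅ then f ∅ else 0 := by
    intro T hT
    have hTd : T.card < d := (card_le_card (mem_powerset.mp hT)).trans_lt
      (by simpa [U] using i.pos)
    rw [hU, mul_W_pred_sub_pred_mul_W hTd]
    by_cases h : T = ∅ <;> simp [h, sub_mul]
  rw [← add_sum_erase _ _ (mem_univ i), hdiag, sum_congr rfl hoff,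
    sum_sum_powerset_erase_mul_sub U (W · d) f, sum_congr rfl hcoef, sum_sub_distrib,
    sum_ite_eq' _ _ (fun _ => f ∅), if_pos (empty_mem_powerset U), shapleyValue]
  ring

/-- Shapley-Taylor efficiency: the indices sum to ν([d]) - ν(∅). -/
theorem shapleyTaylor_efficiency {d : ℕ} (ν : Finset (Fin d) → ℝ) :
    ∑ i : Fin d, ∑ j : Fin d, shapleyTaylor ν i j = ν Finset.univ - ν ∅ := by
  simp only [sum_shapleyTaylor_eq_shapleyValue]
  exact sum_shapleyValue ν
end

section
/- Complexity Reduction for Shapley-Taylor on a decision stump: if P contains no type-B edge and S_X ∩ S_Z = ∅, then, writing n = |S_X∪S_Z| and v the leaf value, for distinct i, j ∈ S_X∪S_Z: Φ_{ij} = W(|S_X|−2, n)·v if i,j ∈ S_X; Φ_{ij} = W(|S_X|, n)·v if i,j ∈ S_Z; Φ_{ij} = −W(|S_X|−1, n)·v if i ∈ S_X and j ∈ S_Z; and for diagonal entries, Φ_{ii} = v if S_X = {i}, Φ_{ii} = −v if S_X = ∅ and i ∈ S_Z, and Φ_{ii} = 0 otherwise for i ∈ S_X∪S_Z. -/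
open Finset

/-- The replace function: coordinates in S come from x, others from the baseline z. -/
def replace {d : ℕ} (x z : Fin d → ℝ) (S : Finset (Fin d)) : Fin d → ℝ :=
  fun i => if i ∈ S then x i else z i

/-- `R` is a Boolean threshold function on coordinate `i`. -/
def IsThreshold {d : ℕ} (i : Fin d) (R : (Fin d → ℝ) → ℝ) : Prop :=
  ∃ γ : ℝ, (∀ w, R w = if w i ≤ γ then 1 else 0) ∨ (∀ w, R w = if γ < w i then 1 else 0)

/-- The decision stump associated with a maximal path. -/
def stump {d : ℕ} {E : Type*} [Fintype E] (v : ℝ) (R : E → (Fin d → ℝ) → ℝ)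
    (w : Fin d → ℝ) : ℝ :=
  v * ∏ e : E, R e w

/-- Feature indices of type-X edges: `R e x = 1` and `R e z = 0`. -/
noncomputable def SX {d : ℕ} {E : Type*} [Fintype E] (idx : E → Fin d)
    (R : E → (Fin d → ℝ) → ℝ) (x z : Fin d → ℝ) : Finset (Fin d) :=
  (Finset.univ.filter (fun e => R e x = 1 ∧ R e z = 0)).image idx

/-- Feature indices of type-Z edges: `R e x = 0` and `R e z = 1`. -/
noncomputable def SZ {d : ℕ} {E : Type*} [Fintype E] (idx : E → Fin d)
    (R : E → (Fin d → ℝ) → ℝ) (x z : Fin d → ℝ) : Finset (Fin d) :=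
  (Finset.univ.filter (fun e => R e x = 0 ∧ R e z = 1)).image idx

/-- Shapley-Taylor index of the pair (i, j) for a game ν, computed over the
reduced player set A (via dummy reduction). -/
noncomputable def shapleyTaylorOn {d : ℕ} (A : Finset (Fin d))
    (ν : Finset (Fin d) → ℝ) (i j : Fin d) : ℝ :=
  if i = j then ν {i} - ν ∅
  else ∑ S ∈ ((A.erase i).erase j).powerset,
    W S.card A.card * (ν (insert i (insert j S)) - ν (insert j S) - ν (insert i S) + ν S)

lemma threshold_congr {d : ℕ} {i : Fin d} {R : (Fin d → ℝ) → ℝ} (h : IsThreshold i R)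
    {w w' : Fin d → ℝ} (hw : w i = w' i) : R w = R w' := by
  obtain ⟨γ, h | h⟩ := h <;> rw [h, h, hw]

lemma threshold_01 {d : ℕ} {i : Fin d} {R : (Fin d → ℝ) → ℝ} (h : IsThreshold i R)
    (w : Fin d → ℝ) : R w = 0 ∨ R w = 1 := by
  obtain ⟨γ, h | h⟩ := h <;> rw [h] <;> split_ifs <;> simp

lemma nu_formula {d : ℕ} {E : Type*} [Fintype E] (v : ℝ)
    (idx : E → Fin d) (R : E → (Fin d → ℝ) → ℝ)
    (hR : ∀ e, IsThreshold (idx e) (R e)) (x z : Fin d → ℝ)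
    (hnoB : ∀ e, ¬ (R e x = 0 ∧ R e z = 0))
    (hdisj : Disjoint (SX idx R x z) (SZ idx R x z)) (S : Finset (Fin d)) :
    stump v R (replace x z S) =
      if SX idx R x z ⊆ S ∧ Disjoint (SZ idx R x z) S then v else 0 := by
  have hrep : ∀ e : E, R e (replace x z S) = if idx e ∈ S then R e x else R e z := by
    intro e
    by_cases h : idx e ∈ S
    · rw [if_pos h]; exact threshold_congr (hR e) (by simp [replace, h])
    · rw [if_neg h]; exact threshold_congr (hR e) (by simp [replace, h])
  unfold stump
  split_ifs with hc
  · obtain ⟨hsub, hdis⟩ := hc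
    have hone : ∀ e ∈ (Finset.univ : Finset E), R e (replace x z S) = 1 := by
      intro e _
      rw [hrep e]
      by_cases h : idx e ∈ S
      · rw [if_pos h]
        rcases threshold_01 (hR e) x with hx | hx
        · rcases threshold_01 (hR e) z with hz | hz
          · exact absurd ⟨hx, hz⟩ (hnoB e)
          · have hmem : idx e ∈ SZ idx R x z :=
              Finset.mem_image.mpr ⟨e, Finset.mem_filter.mpr ⟨Finset.mem_univ e, hx, hz⟩, rfl⟩
            exact absurd h (Finset.disjoint_left.mp hdis hmem)
        · exact hx
      · rw [if_neg h]
        rcases threshold_01 (hR e) z with hz | hz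
        · rcases threshold_01 (hR e) x with hx | hx
          · exact absurd ⟨hx, hz⟩ (hnoB e)
          · have hmem : idx e ∈ SX idx R x z :=
              Finset.mem_image.mpr ⟨e, Finset.mem_filter.mpr ⟨Finset.mem_univ e, hx, hz⟩, rfl⟩
            exact absurd (hsub hmem) h
        · exact hz
    rw [Finset.prod_eq_one hone, mul_one]
  · by_cases hsub : SX idx R x z ⊆ S
    · have hdis : ¬ Disjoint (SZ idx R x z) S := fun h => hc ⟨hsub, h⟩
      rw [Finset.disjoint_left] at hdis
      push_neg at hdis
      obtain ⟨a, haZ, haS⟩ := hdis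
      obtain ⟨e, he, hee⟩ := Finset.mem_image.mp haZ
      obtain ⟨-, hx, hz⟩ := Finset.mem_filter.mp he
      have : R e (replace x z S) = 0 := by
        rw [hrep e, if_pos (hee ▸ haS), hx]
      rw [Finset.prod_eq_zero (Finset.mem_univ e) this, mul_zero]
    · rw [Finset.not_subset] at hsub
      obtain ⟨a, haX, haS⟩ := hsub
      obtain ⟨e, he, hee⟩ := Finset.mem_image.mp haX
      obtain ⟨-, hx, hz⟩ := Finset.mem_filter.mp he
      have : R e (replace x z S) = 0 := by
        rw [hrep e, if_neg (hee ▸ haS), hz]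
      rw [Finset.prod_eq_zero (Finset.mem_univ e) this, mul_zero]

lemma sum_single {d : ℕ} (A : Finset (Fin d)) (i j : Fin d) (S0 : Finset (Fin d))
    (hS0 : S0 ⊆ (A.erase i).erase j) (c : ℝ) (f : Finset (Fin d) → ℝ)
    (hf : ∀ S ∈ ((A.erase i).erase j).powerset, f S = if S = S0 then c else 0) :
    ∑ S ∈ ((A.erase i).erase j).powerset, W S.card A.card * f S = W S0.card A.card * c := by
  rw [Finset.sum_congr rfl (fun S hS => by rw [hf S hS, mul_ite, mul_zero]),
    Finset.sum_ite_eq' , if_pos (Finset.mem_powerset.mpr hS0)]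

/-- Complexity Reduction for Shapley-Taylor indices on a decision stump. -/
theorem taylor_treeshap_complexity_reduction {d : ℕ} {E : Type*} [Fintype E] (v : ℝ)
    (idx : E → Fin d) (R : E → (Fin d → ℝ) → ℝ)
    (hR : ∀ e, IsThreshold (idx e) (R e)) (x z : Fin d → ℝ)
    (hnoB : ∀ e, ¬ (R e x = 0 ∧ R e z = 0))
    (hdisj : Disjoint (SX idx R x z) (SZ idx R x z)) :
    let SXs := SX idx R x z
    let SZs := SZ idx R x z
    let ν : Finset (Fin d) → ℝ := fun S => stump v R (replace x z S)
    let Φ := shapleyTaylorOn (SXs ∪ SZs) ν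
    ∀ i ∈ SXs ∪ SZs, ∀ j ∈ SXs ∪ SZs,
      (i ≠ j → i ∈ SXs → j ∈ SXs → Φ i j = W (SXs.card - 2) (SXs ∪ SZs).card * v) ∧
      (i ≠ j → i ∈ SZs → j ∈ SZs → Φ i j = W SXs.card (SXs ∪ SZs).card * v) ∧
      (i ≠ j → i ∈ SXs → j ∈ SZs → Φ i j = - W (SXs.card - 1) (SXs ∪ SZs).card * v) ∧
      (i = j → SXs = {i} → Φ i i = v) ∧
      (i = j → SXs = ∅ → i ∈ SZs → Φ i i = -v) ∧
      (i = j → ¬ (SXs = {i}) → ¬ (SXs = ∅ ∧ i ∈ SZs) → Φ i i = 0) := by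
  intro SXs SZs ν Φ i hi j hj
  have hnu : ∀ S, ν S = if SXs ⊆ S ∧ Disjoint SZs S then v else 0 :=
    fun S => nu_formula v idx R hR x z hnoB hdisj S
  have hdiag : Φ i i = ν {i} - ν ∅ := by simp [Φ, shapleyTaylorOn]
  refine ⟨?_, ?_, ?_, ?_, ?_, ?_⟩
  · -- i, j ∈ SXs
    intro hij hiX hjX
    have hoff : Φ i j = ∑ S ∈ (((SXs ∪ SZs).erase i).erase j).powerset,
        W S.card (SXs ∪ SZs).card *
        (ν (insert i (insert j S)) - ν (insert j S) - ν (insert i S) + ν S) := by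
      simp [Φ, shapleyTaylorOn, hij]
    rw [hoff]
    have hS0sub : (SXs.erase i).erase j ⊆ ((SXs ∪ SZs).erase i).erase j :=
      Finset.erase_subset_erase j (Finset.erase_subset_erase i Finset.subset_union_left)
    have hcard : ((SXs.erase i).erase j).card = SXs.card - 2 := by
      rw [Finset.card_erase_of_mem (Finset.mem_erase.mpr ⟨hij.symm, hjX⟩),
        Finset.card_erase_of_mem hiX]
      omega
    rw [sum_single (SXs ∪ SZs) i j ((SXs.erase i).erase j) hS0sub v _ ?_, hcard]
    intro S hS
    have hSsub := Finset.mem_powerset.mp hS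
    have hiS : i ∉ S := fun h => (Finset.mem_erase.mp (Finset.mem_erase.mp (hSsub h)).2).1 rfl
    have hjS : j ∉ S := fun h => (Finset.mem_erase.mp (hSsub h)).1 rfl
    have hSA : S ⊆ SXs ∪ SZs := fun a ha =>
      (Finset.mem_erase.mp (Finset.mem_erase.mp (hSsub ha)).2).2
    rw [hnu, hnu, hnu, hnu]
    have c2 : ¬(SXs ⊆ insert j S ∧ Disjoint SZs (insert j S)) := by
      rintro ⟨h, -⟩
      rcases Finset.mem_insert.mp (h hiX) with h' | h'
      · exact hij h'
      · exact hiS h'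
    have c3 : ¬(SXs ⊆ insert i S ∧ Disjoint SZs (insert i S)) := by
      rintro ⟨h, -⟩
      rcases Finset.mem_insert.mp (h hjX) with h' | h'
      · exact hij h'.symm
      · exact hjS h'
    have c4 : ¬(SXs ⊆ S ∧ Disjoint SZs S) := fun ⟨h, _⟩ => hiS (h hiX)
    have c1 : (SXs ⊆ insert i (insert j S) ∧ Disjoint SZs (insert i (insert j S))) ↔
        S = (SXs.erase i).erase j := by
      constructor
      · rintro ⟨hsub, hdis⟩
        apply Finset.Subset.antisymm
        · intro a ha
          have haX : a ∈ SXs := by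
            rcases Finset.mem_union.mp (hSA ha) with h | h
            · exact h
            · exact absurd (Finset.mem_insert_of_mem (Finset.mem_insert_of_mem ha))
                (Finset.disjoint_left.mp hdis h)
          exact Finset.mem_erase.mpr ⟨fun h => hjS (h ▸ ha),
            Finset.mem_erase.mpr ⟨fun h => hiS (h ▸ ha), haX⟩⟩
        · intro a ha
          obtain ⟨haj, hai, haX⟩ : a ≠ j ∧ a ≠ i ∧ a ∈ SXs := by
            have h1 := Finset.mem_erase.mp ha
            have h2 := Finset.mem_erase.mp h1.2
            exact ⟨h1.1, h2.1, h2.2⟩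
          rcases Finset.mem_insert.mp (hsub haX) with h | h
          · exact absurd h hai
          rcases Finset.mem_insert.mp h with h | h
          · exact absurd h haj
          · exact h
      · rintro rfl
        constructor
        · intro a ha
          by_cases h1 : a = i
          · exact h1 ▸ Finset.mem_insert_self _ _
          by_cases h2 : a = j
          · exact Finset.mem_insert_of_mem (h2 ▸ Finset.mem_insert_self _ _)
          · exact Finset.mem_insert_of_mem (Finset.mem_insert_of_mem
              (Finset.mem_erase.mpr ⟨h2, Finset.mem_erase.mpr ⟨h1, ha⟩⟩))
        · rw [Finset.disjoint_left]
          intro a haZ hmem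
          have haX : a ∈ SXs := by
            rcases Finset.mem_insert.mp hmem with h | h
            · exact h ▸ hiX
            rcases Finset.mem_insert.mp h with h | h
            · exact h ▸ hjX
            · exact (Finset.mem_erase.mp (Finset.mem_erase.mp h).2).2
          exact Finset.disjoint_left.mp hdisj haX haZ
    rw [if_neg c2, if_neg c3, if_neg c4]
    by_cases h : S = (SXs.erase i).erase j
    · rw [if_pos (c1.mpr h), if_pos h]; ring
    · rw [if_neg (fun hc => h (c1.mp hc)), if_neg h]; ring
  · -- i, j ∈ SZs
    intro hij hiZ hjZ
    have hoff : Φ i j = ∑ S ∈ (((SXs ∪ SZs).erase i).erase j).powerset,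
        W S.card (SXs ∪ SZs).card *
        (ν (insert i (insert j S)) - ν (insert j S) - ν (insert i S) + ν S) := by
      simp [Φ, shapleyTaylorOn, hij]
    rw [hoff]
    have hS0sub : SXs ⊆ ((SXs ∪ SZs).erase i).erase j := by
      intro a ha
      exact Finset.mem_erase.mpr ⟨fun h => Finset.disjoint_left.mp hdisj (h ▸ ha) hjZ,
        Finset.mem_erase.mpr ⟨fun h => Finset.disjoint_left.mp hdisj (h ▸ ha) hiZ,
          Finset.mem_union_left _ ha⟩⟩
    rw [sum_single (SXs ∪ SZs) i j SXs hS0sub v _ ?_]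
    intro S hS
    have hSsub := Finset.mem_powerset.mp hS
    have hiS : i ∉ S := fun h => (Finset.mem_erase.mp (Finset.mem_erase.mp (hSsub h)).2).1 rfl
    have hjS : j ∉ S := fun h => (Finset.mem_erase.mp (hSsub h)).1 rfl
    have hSA : S ⊆ SXs ∪ SZs := fun a ha =>
      (Finset.mem_erase.mp (Finset.mem_erase.mp (hSsub ha)).2).2
    rw [hnu, hnu, hnu, hnu]
    have c1 : ¬(SXs ⊆ insert i (insert j S) ∧ Disjoint SZs (insert i (insert j S))) := by
      rintro ⟨-, h⟩
      exact Finset.disjoint_left.mp h hiZ (Finset.mem_insert_self _ _)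
    have c2 : ¬(SXs ⊆ insert j S ∧ Disjoint SZs (insert j S)) := by
      rintro ⟨-, h⟩
      exact Finset.disjoint_left.mp h hjZ (Finset.mem_insert_self _ _)
    have c3 : ¬(SXs ⊆ insert i S ∧ Disjoint SZs (insert i S)) := by
      rintro ⟨-, h⟩
      exact Finset.disjoint_left.mp h hiZ (Finset.mem_insert_self _ _)
    have c4 : (SXs ⊆ S ∧ Disjoint SZs S) ↔ S = SXs := by
      constructor
      · rintro ⟨hsub, hdis⟩
        apply Finset.Subset.antisymm
        · intro a ha
          rcases Finset.mem_union.mp (hSA ha) with h | h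
          · exact h
          · exact absurd ha (Finset.disjoint_left.mp hdis h)
        · exact hsub
      · rintro rfl
        exact ⟨Finset.Subset.refl _, hdisj.symm⟩
    rw [if_neg c1, if_neg c2, if_neg c3]
    by_cases h : S = SXs
    · rw [if_pos (c4.mpr h), if_pos h]; ring
    · rw [if_neg (fun hc => h (c4.mp hc)), if_neg h]; ring
  · -- i ∈ SXs, j ∈ SZs
    intro hij hiX hjZ
    have hoff : Φ i j = ∑ S ∈ (((SXs ∪ SZs).erase i).erase j).powerset,
        W S.card (SXs ∪ SZs).card *
        (ν (insert i (insert j S)) - ν (insert j S) - ν (insert i S) + ν S) := by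
      simp [Φ, shapleyTaylorOn, hij]
    rw [hoff]
    have hS0sub : SXs.erase i ⊆ ((SXs ∪ SZs).erase i).erase j := by
      intro a ha
      obtain ⟨hai, haX⟩ := Finset.mem_erase.mp ha
      exact Finset.mem_erase.mpr ⟨fun h => Finset.disjoint_left.mp hdisj (h ▸ haX) hjZ,
        Finset.mem_erase.mpr ⟨hai, Finset.mem_union_left _ haX⟩⟩
    have hcard : (SXs.erase i).card = SXs.card - 1 := Finset.card_erase_of_mem hiX
    rw [sum_single (SXs ∪ SZs) i j (SXs.erase i) hS0sub (-v) _ ?_, hcard]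
    · ring
    intro S hS
    have hSsub := Finset.mem_powerset.mp hS
    have hiS : i ∉ S := fun h => (Finset.mem_erase.mp (Finset.mem_erase.mp (hSsub h)).2).1 rfl
    have hjS : j ∉ S := fun h => (Finset.mem_erase.mp (hSsub h)).1 rfl
    have hSA : S ⊆ SXs ∪ SZs := fun a ha =>
      (Finset.mem_erase.mp (Finset.mem_erase.mp (hSsub ha)).2).2
    rw [hnu, hnu, hnu, hnu]
    have c1 : ¬(SXs ⊆ insert i (insert j S) ∧ Disjoint SZs (insert i (insert j S))) := by
      rintro ⟨-, h⟩
      exact Finset.disjoint_left.mp h hjZ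
        (Finset.mem_insert_of_mem (Finset.mem_insert_self _ _))
    have c2 : ¬(SXs ⊆ insert j S ∧ Disjoint SZs (insert j S)) := by
      rintro ⟨-, h⟩
      exact Finset.disjoint_left.mp h hjZ (Finset.mem_insert_self _ _)
    have c4 : ¬(SXs ⊆ S ∧ Disjoint SZs S) := fun ⟨h, _⟩ => hiS (h hiX)
    have c3 : (SXs ⊆ insert i S ∧ Disjoint SZs (insert i S)) ↔ S = SXs.erase i := by
      constructor
      · rintro ⟨hsub, hdis⟩
        apply Finset.Subset.antisymm
        · intro a ha
          have haX : a ∈ SXs := by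
            rcases Finset.mem_union.mp (hSA ha) with h | h
            · exact h
            · exact absurd (Finset.mem_insert_of_mem ha) (Finset.disjoint_left.mp hdis h)
          exact Finset.mem_erase.mpr ⟨fun h => hiS (h ▸ ha), haX⟩
        · intro a ha
          obtain ⟨hai, haX⟩ := Finset.mem_erase.mp ha
          rcases Finset.mem_insert.mp (hsub haX) with h | h
          · exact absurd h hai
          · exact h
      · rintro rfl
        constructor
        · intro a ha
          by_cases h1 : a = i
          · exact h1 ▸ Finset.mem_insert_self _ _
          · exact Finset.mem_insert_of_mem (Finset.mem_erase.mpr ⟨h1, ha⟩)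
        · rw [Finset.disjoint_left]
          intro a haZ hmem
          have haX : a ∈ SXs := by
            rcases Finset.mem_insert.mp hmem with h | h
            · exact h ▸ hiX
            · exact (Finset.mem_erase.mp h).2
          exact Finset.disjoint_left.mp hdisj haX haZ
    rw [if_neg c1, if_neg c2, if_neg c4]
    by_cases h : S = SXs.erase i
    · rw [if_pos (c3.mpr h), if_pos h]; ring
    · rw [if_neg (fun hc => h (c3.mp hc)), if_neg h]; ring
  · -- diagonal, SXs = {i}
    intro _ hXi
    have hiX : i ∈ SXs := hXi ▸ Finset.mem_singleton_self i
    rw [hdiag, hnu, hnu]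
    rw [if_pos ⟨by rw [hXi], Finset.disjoint_singleton_right.mpr
      (fun h => Finset.disjoint_left.mp hdisj hiX h)⟩,
      if_neg (fun ⟨h, _⟩ => by simp [hXi] at h)]
    ring
  · -- diagonal, SXs = ∅, i ∈ SZs
    intro _ hX0 hiZ
    rw [hdiag, hnu, hnu]
    rw [if_neg (fun ⟨_, h⟩ => Finset.disjoint_singleton_right.mp h hiZ),
      if_pos ⟨by rw [hX0], Finset.disjoint_empty_right _⟩]
    ring
  · -- diagonal, otherwise
    intro _ hns hnz
    rw [hdiag, hnu, hnu]
    rcases Finset.mem_union.mp hi with hiX | hiZ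
    · rw [if_neg (fun ⟨h, _⟩ => by
        rcases Finset.subset_singleton_iff.mp h with h' | h'
        · exact absurd (h' ▸ hiX) (Finset.notMem_empty i)
        · exact hns h'),
        if_neg (fun ⟨h, _⟩ => absurd (h hiX) (Finset.notMem_empty i))]
      ring
    · rw [if_neg (fun ⟨_, h⟩ => Finset.disjoint_singleton_right.mp h hiZ),
        if_neg (fun ⟨h, _⟩ => hnz ⟨Finset.subset_empty.mp h, hiZ⟩)]
      ring
end
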